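/- arXiv:math/0506150 — 3 statements merged into one kernel-verified Lean document; each statement's English description precedes it below -/
import Mathlib

section
/- For every integer N ≥ 0, the finite sum f_N(z) = (q)_N · Σ_{j=0}^{N} z^j q^{j^2} / ((zq)_j (q)_j (q)_{N−j}) equals 1/(zq)_N. -/
/-!
Clearing denominators with `(q)_N = [N, j]_q (q)_j (q)_{N-j}` and
`(zq)_N = (zq)_j (zq^{j+1}; q)_{N-j}` turns the identity into
`S_N(z) := ∑ⱼ [N, j]_q zʲ q^{j²} (zq^{j+1}; q)_{N-j} = 1`. Splitting `[N+1, j]_q` by the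
q-Pascal rule gives `S_{N+1}(z) = (1 - zq^{N+1}) S_N(z) + zq^{N+1} S_N(zq)`, so `S_N = 1` by
induction on `N`.
-/

open Finset

section CommRing

variable {R : Type*} [CommRing R]

/-- `(a; q)_n`; the `(q)_n` and `(zq)_n` of the statement are `(q; q)_n` and `(zq; q)_n`. -/
def qPochhammer (a q : R) (n : ℕ) : R := ∏ i ∈ range n, (1 - a * q ^ i)

@[simp]
lemma qPochhammer_zero (a q : R) : qPochhammer a q 0 = 1 := prod_range_zero _

lemma qPochhammer_succ (a q : R) (n : ℕ) :
    qPochhammer a q (n + 1) = qPochhammer a q n * (1 - a * q ^ n) :=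
  prod_range_succ _ _

lemma qPochhammer_add (a q : R) (m n : ℕ) :
    qPochhammer a q (m + n) = qPochhammer a q m * qPochhammer (a * q ^ m) q n := by
  simp only [qPochhammer, prod_range_add, pow_add, mul_assoc]

lemma qPochhammer_ne_zero_of_le {a q : R} {m n : ℕ} (hmn : m ≤ n)
    (hn : qPochhammer a q n ≠ 0) : qPochhammer a q m ≠ 0 := by
  obtain ⟨k, rfl⟩ := Nat.exists_eq_add_of_le hmn
  exact left_ne_zero_of_mul (qPochhammer_add a q m k ▸ hn)

lemma prod_range_one_sub_mul_pow_succ (z q : R) (n : ℕ) :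
    ∏ i ∈ range n, (1 - z * q ^ (i + 1)) = qPochhammer (z * q) q n := by
  simp only [qPochhammer, pow_succ', mul_assoc]

lemma prod_range_one_sub_pow_succ (q : R) (n : ℕ) :
    ∏ i ∈ range n, (1 - q ^ (i + 1)) = qPochhammer q q n := by
  simpa using prod_range_one_sub_mul_pow_succ 1 q n

def qBinomial (q : R) : ℕ → ℕ → R
  | _, 0 => 1
  | 0, _ + 1 => 0
  | n + 1, k + 1 => q ^ (n - k) * qBinomial q n k + qBinomial q n (k + 1)

@[simp]
lemma qBinomial_zero_right (q : R) (n : ℕ) : qBinomial q n 0 = 1 := by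
  cases n <;> rfl

lemma qBinomial_succ_succ (q : R) (n k : ℕ) :
    qBinomial q (n + 1) (k + 1) = q ^ (n - k) * qBinomial q n k + qBinomial q n (k + 1) :=
  rfl

lemma qBinomial_eq_zero_of_lt (q : R) {n k : ℕ} (h : n < k) : qBinomial q n k = 0 := by
  induction n generalizing k with
  | zero => obtain ⟨k, rfl⟩ := Nat.exists_eq_succ_of_ne_zero (by omega : k ≠ 0); rfl
  | succ n ih =>
    obtain ⟨k, rfl⟩ := Nat.exists_eq_succ_of_ne_zero (by omega : k ≠ 0)
    rw [qBinomial_succ_succ, ih (by omega), ih (by omega), mul_zero, add_zero]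

@[simp]
lemma qBinomial_self (q : R) (n : ℕ) : qBinomial q n n = 1 := by
  induction n with
  | zero => rfl
  | succ n ih => simp [qBinomial_succ_succ, ih, qBinomial_eq_zero_of_lt]

lemma qBinomial_mul_qPochhammer (q : R) {n k : ℕ} (h : k ≤ n) :
    qBinomial q n k * qPochhammer q q k * qPochhammer q q (n - k) = qPochhammer q q n := by
  induction n generalizing k with
  | zero =>
    obtain rfl : k = 0 := by omega
    simp
  | succ n ih =>
    rcases k with _ | k
    · simp
    rcases (by omega : k = n ∨ k < n) with rfl | hk
    · simp
    obtain ⟨m, rfl⟩ : ∃ m, n = k + 1 + m := ⟨n - (k + 1), by omega⟩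
    have ih₀ := ih (k := k) (by omega)
    have ih₁ := ih (k := k + 1) (by omega)
    rw [show k + 1 + m - k = m + 1 by omega, qPochhammer_succ] at ih₀
    rw [show k + 1 + m - (k + 1) = m by omega, qPochhammer_succ] at ih₁
    rw [qBinomial_succ_succ, show k + 1 + m + 1 - (k + 1) = m + 1 by omega,
      show k + 1 + m - k = m + 1 by omega, qPochhammer_succ, qPochhammer_succ,
      qPochhammer_succ q q (k + 1 + m)]
    linear_combination q ^ (m + 1) * (1 - q * q ^ k) * ih₀ + (1 - q * q ^ m) * ih₁

lemma sum_range_qBinomial_succ (q : R) (N : ℕ) (f : ℕ → R) :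
    ∑ j ∈ range (N + 2), qBinomial q (N + 1) j * f j =
      ∑ j ∈ range (N + 1), qBinomial q N j * f j
        + ∑ j ∈ range (N + 1), q ^ (N - j) * qBinomial q N j * f (j + 1) := by
  have hlast : qBinomial q N (N + 1) * f (N + 1) = 0 := by
    rw [qBinomial_eq_zero_of_lt q (Nat.lt_succ_self N), zero_mul]
  rw [sum_range_succ', ← add_zero (∑ j ∈ range (N + 1), qBinomial q N j * f j), ← hlast,
    ← sum_range_succ, sum_range_succ' (fun j => qBinomial q N j * f j)]
  simp only [qBinomial_succ_succ, qBinomial_zero_right, add_mul, sum_add_distrib]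
  ring

def qGaussSum (q z : R) (N : ℕ) : R :=
  ∑ j ∈ range (N + 1),
    qBinomial q N j * (z ^ j * q ^ (j ^ 2) * qPochhammer (z * q ^ (j + 1)) q (N - j))

lemma qGaussSum_succ (q z : R) (N : ℕ) :
    qGaussSum q z (N + 1) =
      (1 - z * q ^ (N + 1)) * qGaussSum q z N + z * q ^ (N + 1) * qGaussSum q (z * q) N := by
  rw [qGaussSum, sum_range_qBinomial_succ, qGaussSum, qGaussSum, mul_sum, mul_sum]
  congr 1 <;> refine sum_congr rfl fun j hj => ?_
  all_goals obtain ⟨m, rfl⟩ : ∃ m, N = j + m := ⟨N - j, by have := mem_range.1 hj; omega⟩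
  · rw [show j + m + 1 - j = m + 1 by omega, Nat.add_sub_cancel_left, qPochhammer_succ]
    ring
  · rw [show j + m + 1 - (j + 1) = m by omega, Nat.add_sub_cancel_left,
      show z * q ^ (j + 1 + 1) = z * q * q ^ (j + 1) by ring]
    ring

theorem qGaussSum_eq_one (q z : R) (N : ℕ) : qGaussSum q z N = 1 := by
  induction N generalizing z with
  | zero => simp [qGaussSum]
  | succ N ih => rw [qGaussSum_succ, ih, ih]; ring

end CommRing

theorem qPochhammer_mul_sum_div_eq_inv {K : Type*} [Field K] {q z : K} {N : ℕ}
    (hq : qPochhammer q q N ≠ 0) (hz : qPochhammer (z * q) q N ≠ 0) :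
    qPochhammer q q N * ∑ j ∈ range (N + 1), z ^ j * q ^ (j ^ 2) /
        (qPochhammer (z * q) q j * qPochhammer q q j * qPochhammer q q (N - j)) =
      (qPochhammer (z * q) q N)⁻¹ := by
  refine eq_inv_of_mul_eq_one_right ?_
  rw [← qGaussSum_eq_one q z N, qGaussSum, mul_sum, mul_sum]
  refine sum_congr rfl fun j hj => ?_
  obtain ⟨m, rfl⟩ : ∃ m, N = j + m := ⟨N - j, by have := mem_range.1 hj; omega⟩
  have hzj := qPochhammer_ne_zero_of_le (Nat.le_add_right j m) hz
  have hqj := qPochhammer_ne_zero_of_le (Nat.le_add_right j m) hq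
  have hqm := qPochhammer_ne_zero_of_le (Nat.le_add_left m j) hq
  rw [Nat.add_sub_cancel_left, ← qBinomial_mul_qPochhammer q (Nat.le_add_right j m),
    Nat.add_sub_cancel_left, qPochhammer_add, mul_assoc z q, ← pow_succ']
  field_simp

/-- For every `N ≥ 0`,
`f_N(z) = (q)_N · Σ_{j=0}^N z^j q^{j²} / ((zq)_j (q)_j (q)_{N-j}) = 1/(zq)_N`. -/
theorem stmt2 (q z : ℂ) (N : ℕ)
    (hq : ∀ i ∈ Finset.range N, q ^ (i + 1) ≠ 1)
    (hz : ∀ i ∈ Finset.range N, z * q ^ (i + 1) ≠ 1) :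
    (∏ j ∈ Finset.range N, (1 - q ^ (j + 1))) *
        ∑ j ∈ Finset.range (N + 1),
          z ^ j * q ^ (j ^ 2) /
            ((∏ i ∈ Finset.range j, (1 - z * q ^ (i + 1))) *
              (∏ i ∈ Finset.range j, (1 - q ^ (i + 1))) *
              ∏ i ∈ Finset.range (N - j), (1 - q ^ (i + 1)))
      = (∏ j ∈ Finset.range N, (1 - z * q ^ (j + 1)))⁻¹ := by
  have hPq : ∏ i ∈ range N, (1 - q ^ (i + 1)) ≠ 0 :=
    prod_ne_zero_iff.2 fun i hi => sub_ne_zero.2 (hq i hi).symm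
  have hPz : ∏ i ∈ range N, (1 - z * q ^ (i + 1)) ≠ 0 :=
    prod_ne_zero_iff.2 fun i hi => sub_ne_zero.2 (hz i hi).symm
  simp only [prod_range_one_sub_pow_succ, prod_range_one_sub_mul_pow_succ] at hPq hPz ⊢
  exact qPochhammer_mul_sum_div_eq_inv hPq hPz
end

section
/- With F_k(μ) = Σ_{N_0,…,N_{k−1} ≥ 0} q^{Σ_{j=0}^{k−1} N_j² + μN_0 + (μ+1)Σ_{j=1}^{k−1} N_j} / ((q)_{N_0+μ}(q)_{N_0}(q)_{N_1−N_0}⋯(q)_{N_{k−1}−N_{k−2}}) (convention 1/(q)_n = 0 for n < 0), one has for every integer μ and every k ≥ 1: F_k(μ−1) − q^μ F_k(−μ−1) = (1 − q^μ)/(q)_∞. -/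
/-- `(q)_n = ∏_{j=1}^n (1 - q^j)`. -/
noncomputable def qpC (q : ℂ) (n : ℕ) : ℂ := ∏ j ∈ Finset.range n, (1 - q ^ (j + 1))

/-- `1/(q)_n`, with the convention that it is `0` for `n < 0`. -/
noncomputable def qpInv (q : ℂ) (n : ℤ) : ℂ := if n < 0 then 0 else (qpC q n.toNat)⁻¹

/-- `F_k(μ) = Σ_{N_0,…,N_{k-1} ≥ 0} q^{Σ N_j² + μN_0 + (μ+1)Σ_{j≥1}N_j} /
((q)_{N_0+μ}(q)_{N_0}(q)_{N_1-N_0}⋯(q)_{N_{k-1}-N_{k-2}})`. -/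
noncomputable def FF (q : ℂ) (k : ℕ) (μ : ℤ) : ℂ :=
  ∑' N : Fin k → ℕ,
    (let NN : ℕ → ℕ := fun j => if h : j < k then N ⟨j, h⟩ else 0
     q ^ ((∑ j ∈ Finset.range k, (NN j : ℤ) ^ 2) + μ * (NN 0 : ℤ)
            + (μ + 1) * ∑ j ∈ Finset.Ico 1 k, (NN j : ℤ)) *
       (qpInv q ((NN 0 : ℤ) + μ) * qpInv q (NN 0) *
         ∏ j ∈ Finset.Ico 1 k, qpInv q ((NN j : ℤ) - (NN (j - 1) : ℤ))))

/-!
Induction on `N`, using `1/(q)_{n-1} = (1 - q^n)/(q)_n`, gives the finite Durfee rectangle identity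
`∑ₙ q^{n² + μn} / ((q)_{n+μ} (q)_n (q)_{N-n}) = 1 / ((q)_{N+μ} (q)_N)`, and letting `N → ∞` gives
`∑ₙ q^{n² + μn} / ((q)_{n+μ} (q)_n) = 1/(q)_∞`. Summing out `N₀, N₁, …` one at a time with the
finite identity, the `k`-fold sum with exponent `∑ N_j² + μ ∑ N_j` also equals `1/(q)_∞`. For
`μ ≥ 0`, the substitution `N_j ↦ N_j + μ` in `F_k(-μ-1)` (the terms it misses vanish) makes the
left-hand side equal to this sum times `1 - q^μ`, termwise; exchanging `μ` and `-μ` gives `μ < 0`.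
-/

open Filter Topology

section Pochhammer

variable {q : ℂ}

lemma qpInv_of_neg {n : ℤ} (h : n < 0) : qpInv q n = 0 := if_pos h

lemma qpInv_natCast (n : ℕ) : qpInv q n = (qpC q n)⁻¹ := by simp [qpInv]

lemma qpInv_zero : qpInv q 0 = 1 := by simpa [qpC] using qpInv_natCast (q := q) 0

lemma one_sub_pow_ne_zero (hq : ‖q‖ < 1) {n : ℕ} (hn : n ≠ 0) : 1 - q ^ n ≠ 0 := by
  rw [sub_ne_zero, ne_comm]
  intro h
  have := pow_lt_one₀ (norm_nonneg q) hq hn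
  rw [← norm_pow, h, norm_one] at this
  exact this.false

lemma qpInv_sub_one (hq : ‖q‖ < 1) (n : ℤ) : qpInv q (n - 1) = (1 - q ^ n) * qpInv q n := by
  rcases lt_trichotomy n 0 with h | rfl | h
  · rw [qpInv_of_neg h, qpInv_of_neg (by omega), mul_zero]
  · simp [qpInv_of_neg]
  · lift n to ℕ using h.le
    obtain ⟨m, rfl⟩ := Nat.exists_eq_add_of_le' (show 1 ≤ n by omega)
    push_cast
    rw [add_sub_cancel_right, qpInv_natCast, ← Nat.cast_succ, qpInv_natCast, zpow_natCast,
      qpC, qpC, Finset.prod_range_succ, mul_inv, mul_left_comm,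
      mul_inv_cancel₀ (one_sub_pow_ne_zero hq m.succ_ne_zero), mul_one]

end Pochhammer

section FiniteDurfee

variable {q : ℂ}

noncomputable def durfeeTerm (q : ℂ) (μ : ℤ) (N n : ℕ) : ℂ :=
  q ^ ((n : ℤ) ^ 2 + μ * n) * (qpInv q (n + μ) * qpInv q n * qpInv q ((N : ℤ) - n))

lemma one_sub_pow_mul_sum_durfeeTerm_succ (hq : ‖q‖ < 1) (hq0 : q ≠ 0) (μ : ℤ) (N : ℕ) :
    (1 - q ^ (N + 1)) * ∑ n ∈ Finset.range (N + 2), durfeeTerm q (μ - 1) (N + 1) n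
      = ∑ n ∈ Finset.range (N + 1), durfeeTerm q μ N n := by
  -- split `1 - q^(N+1) = (1 - q^n) + q^n (1 - q^(N+1-n))`, absorbing each factor into a `qpInv`
  let A : ℕ → ℂ := fun n => q ^ ((n : ℤ) ^ 2 + (μ - 1) * n) *
    (qpInv q (n + (μ - 1)) * qpInv q ((n : ℤ) - 1) * qpInv q ((N : ℤ) + 1 - n))
  let B : ℕ → ℂ := fun n => q ^ ((n : ℤ) ^ 2 + μ * n) *
    (qpInv q (n + (μ - 1)) * qpInv q n * qpInv q ((N : ℤ) - n))
  have hsplit (n : ℕ) : (1 - q ^ (N + 1)) * durfeeTerm q (μ - 1) (N + 1) n = A n + B n := by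
    have h1 := qpInv_sub_one hq (n : ℤ)
    have h2 := qpInv_sub_one hq ((N : ℤ) + 1 - n)
    rw [show (N : ℤ) + 1 - n - 1 = N - n by ring] at h2
    have e : q ^ ((n : ℤ) ^ 2 + μ * n) * q ^ ((N : ℤ) + 1 - n)
        = q ^ ((n : ℤ) ^ 2 + (μ - 1) * n) * q ^ (N + 1) := by
      rw [← zpow_natCast, ← zpow_add₀ hq0, ← zpow_add₀ hq0]; congr 1; push_cast; ring
    have e' : q ^ ((n : ℤ) ^ 2 + μ * n) = q ^ ((n : ℤ) ^ 2 + (μ - 1) * n) * q ^ (n : ℤ) := by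
      rw [← zpow_add₀ hq0]; congr 1; ring
    simp only [durfeeTerm, A, B, h1, h2, Nat.cast_add, Nat.cast_one]
    linear_combination (qpInv q (n + (μ - 1)) * qpInv q n * qpInv q ((N : ℤ) + 1 - n)) * e
      - (qpInv q (n + (μ - 1)) * qpInv q n * qpInv q ((N : ℤ) + 1 - n)) * e'
  have hA (n : ℕ) : A (n + 1) = q ^ ((n : ℤ) + μ) * durfeeTerm q μ N n := by
    have e : q ^ (((n + 1 : ℕ) : ℤ) ^ 2 + (μ - 1) * (n + 1 : ℕ))
        = q ^ ((n : ℤ) + μ) * q ^ ((n : ℤ) ^ 2 + μ * n) := by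
      rw [← zpow_add₀ hq0]; congr 1; push_cast; ring
    simp only [A, durfeeTerm, e]
    rw [show ((n + 1 : ℕ) : ℤ) + (μ - 1) = n + μ by push_cast; ring,
      show ((n + 1 : ℕ) : ℤ) - 1 = n by push_cast; ring,
      show (N : ℤ) + 1 - (n + 1 : ℕ) = N - n by push_cast; ring]
    ring
  have hB (n : ℕ) : B n = (1 - q ^ ((n : ℤ) + μ)) * durfeeTerm q μ N n := by
    simp only [B, durfeeTerm]
    rw [show (n : ℤ) + (μ - 1) = n + μ - 1 by ring, qpInv_sub_one hq]
    ring
  have hA0 : A 0 = 0 := by simp [A, qpInv_of_neg]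
  have hBlast : B (N + 1) = 0 := by simp [B, qpInv_of_neg]
  rw [Finset.mul_sum, Finset.sum_congr rfl fun n _ => hsplit n, Finset.sum_add_distrib,
    Finset.sum_range_succ' A, Finset.sum_range_succ B, hA0, hBlast, add_zero, add_zero,
    ← Finset.sum_add_distrib]
  exact Finset.sum_congr rfl fun n _ => by rw [hA, hB]; ring

lemma sum_durfeeTerm (hq : ‖q‖ < 1) (hq0 : q ≠ 0) (μ : ℤ) (N : ℕ) :
    ∑ n ∈ Finset.range (N + 1), durfeeTerm q μ N n = qpInv q (N + μ) * qpInv q N := by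
  induction N generalizing μ with
  | zero => simp [durfeeTerm, qpInv_zero]
  | succ N ih =>
    have h := one_sub_pow_mul_sum_durfeeTerm_succ hq hq0 (μ + 1) N
    rw [add_sub_cancel_right, ih, show (N : ℤ) + (μ + 1) = (N + 1 : ℕ) + μ by push_cast; ring,
      show (N : ℤ) = (N + 1 : ℕ) - 1 by push_cast; ring, qpInv_sub_one hq, zpow_natCast,
      mul_left_comm] at h
    exact mul_left_cancel₀ (one_sub_pow_ne_zero hq N.succ_ne_zero) h

lemma durfeeTerm_of_lt {μ : ℤ} {N n : ℕ} (h : N < n) : durfeeTerm q μ N n = 0 := by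
  rw [durfeeTerm, qpInv_of_neg (show (N : ℤ) - n < 0 by omega), mul_zero, mul_zero]

lemma tsum_durfeeTerm (hq : ‖q‖ < 1) (hq0 : q ≠ 0) (μ : ℤ) (N : ℕ) :
    ∑' n, durfeeTerm q μ N n = qpInv q (N + μ) * qpInv q N := by
  rw [tsum_eq_sum (s := Finset.range (N + 1)) fun n hn => durfeeTerm_of_lt (by simpa using hn),
    sum_durfeeTerm hq hq0]

end FiniteDurfee

section Limits

variable {q : ℂ}

lemma tendsto_qpC (hq : ‖q‖ < 1) :
    Tendsto (qpC q) atTop (𝓝 (∏' j : ℕ, (1 - q ^ (j + 1)))) :=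
  (ModularForm.multipliable_one_sub_pow hq).hasProd.tendsto_prod_nat

lemma tprod_one_sub_pow_ne_zero (hq : ‖q‖ < 1) : ∏' j : ℕ, (1 - q ^ (j + 1)) ≠ 0 := by
  simp_rw [sub_eq_add_neg]
  refine tprod_one_add_ne_zero_of_summable (fun j => ?_) ?_
  · simpa [← sub_eq_add_neg] using one_sub_pow_ne_zero hq j.succ_ne_zero
  · simpa [norm_pow] using (summable_nat_add_iff 1).mpr
      (summable_geometric_of_lt_one (norm_nonneg q) hq)

lemma tendsto_qpInv_add (hq : ‖q‖ < 1) (c : ℤ) :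
    Tendsto (fun N : ℕ => qpInv q (N + c)) atTop (𝓝 (∏' j : ℕ, (1 - q ^ (j + 1)))⁻¹) := by
  have hshift : Tendsto (fun N : ℕ => ((N : ℤ) + c).toNat) atTop atTop :=
    tendsto_atTop_atTop.2 fun b => ⟨b + c.natAbs, fun N hN => by omega⟩
  refine (((tendsto_qpC hq).inv₀ (tprod_one_sub_pow_ne_zero hq)).comp hshift).congr' ?_
  filter_upwards [eventually_ge_atTop c.natAbs] with N hN
  rw [Function.comp_apply, ← qpInv_natCast, Int.toNat_of_nonneg (by omega)]

lemma exists_norm_qpInv_le (hq : ‖q‖ < 1) : ∃ K, ∀ n : ℤ, ‖qpInv q n‖ ≤ K := by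
  obtain ⟨K, hK⟩ := isBounded_iff_forall_norm_le.1
    (Metric.isBounded_range_of_tendsto _ (by simpa using tendsto_qpInv_add hq 0))
  refine ⟨K, fun n => ?_⟩
  rcases lt_or_ge n 0 with h | h
  · simpa [qpInv_of_neg h] using (norm_nonneg _).trans (hK _ ⟨0, rfl⟩)
  · lift n to ℕ using h
    exact hK _ ⟨n, rfl⟩

lemma le_sq_add_mul_add_sq (c : ℤ) (n : ℕ) : (n : ℤ) ≤ n ^ 2 + c * n + (c - 1) ^ 2 := by
  nlinarith [sq_nonneg (2 * (n : ℤ) + c - 1)]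

lemma zpow_sq_add_mul_le {r : ℝ} (hr0 : 0 < r) (hr1 : r ≤ 1) (c : ℤ) (n : ℕ) :
    r ^ ((n : ℤ) ^ 2 + c * n) ≤ r ^ (-(c - 1) ^ 2) * r ^ n := by
  rw [← zpow_natCast, ← zpow_add₀ hr0.ne']
  exact zpow_le_zpow_right_of_le_one₀ hr0 hr1 (by linarith [le_sq_add_mul_add_sq c n])

lemma tsum_durfee (hq : ‖q‖ < 1) (hq0 : q ≠ 0) (μ : ℤ) :
    ∑' n : ℕ, q ^ ((n : ℤ) ^ 2 + μ * n) * (qpInv q (n + μ) * qpInv q n)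
      = (∏' j : ℕ, (1 - q ^ (j + 1)))⁻¹ := by
  set P := ∏' j : ℕ, (1 - q ^ (j + 1))
  set a : ℕ → ℂ := fun n => q ^ ((n : ℤ) ^ 2 + μ * n) * (qpInv q (n + μ) * qpInv q n)
  obtain ⟨K, hK⟩ := exists_norm_qpInv_le hq
  have hK0 : 0 ≤ K := (norm_nonneg _).trans (hK 0)
  have ha : Summable fun n => ‖a n‖ := by
    refine Summable.of_nonneg_of_le (fun _ => norm_nonneg _) (fun n => ?_)
      ((summable_geometric_of_lt_one (norm_nonneg q) hq).mul_left (K * K * ‖q‖ ^ (-(μ - 1) ^ 2)))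
    calc ‖a n‖ = ‖q‖ ^ ((n : ℤ) ^ 2 + μ * n) * (‖qpInv q (n + μ)‖ * ‖qpInv q n‖) := by
          simp [a, norm_zpow]
      _ ≤ ‖q‖ ^ (-(μ - 1) ^ 2) * ‖q‖ ^ n * (K * K) := by
          gcongr
          · exact zpow_sq_add_mul_le (norm_pos_iff.2 hq0) hq.le μ n
          · exact hK _
          · exact hK _
      _ = _ := by ring
  -- Tannery: let `N → ∞` in the finite identity `∑ n, a n / (q)_{N-n} = 1/((q)_{N+μ} (q)_N)`
  have hlim : Tendsto (fun N : ℕ => ∑' n, durfeeTerm q μ N n) atTop (𝓝 (∑' n, a n * P⁻¹)) := by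
    refine tendsto_tsum_of_dominated_convergence (ha.mul_right K) (fun n => ?_)
      (.of_forall fun N n => ?_)
    · refine ((tendsto_qpInv_add hq (-n)).const_mul (a n)).congr fun N => ?_
      simp only [durfeeTerm, a, sub_eq_add_neg, mul_assoc]
    · simpa [durfeeTerm, a, mul_assoc, norm_mul] using
        mul_le_mul_of_nonneg_left (hK ((N : ℤ) - n)) (norm_nonneg (a n))
  have hlim' : Tendsto (fun N : ℕ => ∑' n, durfeeTerm q μ N n) atTop (𝓝 (P⁻¹ * P⁻¹)) := by
    simpa only [tsum_durfeeTerm hq hq0] using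
      (tendsto_qpInv_add hq μ).mul (by simpa using tendsto_qpInv_add hq 0)
  have h := tendsto_nhds_unique hlim hlim'
  rw [tsum_mul_right] at h
  exact mul_right_cancel₀ (inv_ne_zero (tprod_one_sub_pow_ne_zero hq)) h

end Limits

lemma summable_pow_sum_fin {r : ℝ} (hr0 : 0 ≤ r) (hr1 : r < 1) (n : ℕ) :
    Summable fun N : Fin n → ℕ => r ^ ∑ j, N j := by
  induction n with
  | zero => exact .of_finite
  | succ n ih =>
    rw [← (Fin.consEquiv fun _ => ℕ).summable_iff]
    refine ((summable_geometric_of_lt_one hr0 hr1).mul_of_nonneg ih (fun _ => by positivity)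
      fun _ => by positivity).congr fun x => ?_
    simp [Fin.consEquiv, Fin.sum_univ_succ, pow_add]

section Chains

variable {q : ℂ} {m : ℕ}

noncomputable def chainTerm (q : ℂ) (a b : ℤ) (N : Fin (m + 1) → ℕ) : ℂ :=
  q ^ (∑ j, (N j : ℤ) ^ 2 + a * N 0 + b * ∑ j : Fin m, (N j.succ : ℤ)) *
    (qpInv q (N 0 + a) * qpInv q (N 0) * ∏ j : Fin m, qpInv q ((N j.succ : ℤ) - N j.castSucc))

lemma FF_eq_tsum_chainTerm (q : ℂ) (m : ℕ) (μ : ℤ) :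
    FF q (m + 1) μ = ∑' N : Fin (m + 1) → ℕ, chainTerm q μ (μ + 1) N := by
  refine tsum_congr fun N => ?_
  simp (disch := omega) only [Finset.sum_range, Finset.prod_range, Finset.sum_Ico_eq_sum_range,
    Finset.prod_Ico_eq_prod_range, add_tsub_cancel_right, add_tsub_cancel_left, dif_pos]
  simp only [add_comm 1]
  rfl

lemma sum_sub_le_chainExponent (a b : ℤ) (N : Fin (m + 1) → ℕ) :
    ∑ j, (N j : ℤ) - (m + 1) * (min a b - 1) ^ 2
      ≤ ∑ j, (N j : ℤ) ^ 2 + a * N 0 + b * ∑ j : Fin m, (N j.succ : ℤ) := by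
  set c := min a b
  have hcoord := Finset.sum_le_sum fun j (_ : j ∈ Finset.univ) =>
    show (N j : ℤ) - (c - 1) ^ 2 ≤ (N j : ℤ) ^ 2 + c * N j by
      linarith [le_sq_add_mul_add_sq c (N j)]
  rw [Finset.sum_sub_distrib, Finset.sum_add_distrib, ← Finset.mul_sum,
    Fin.sum_univ_succ (fun j => (N j : ℤ))] at hcoord
  have ha : c * N 0 ≤ a * N 0 := mul_le_mul_of_nonneg_right (min_le_left a b) (by positivity)
  have hb : c * ∑ j : Fin m, (N j.succ : ℤ) ≤ b * ∑ j : Fin m, (N j.succ : ℤ) :=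
    mul_le_mul_of_nonneg_right (min_le_right a b) (by positivity)
  simp only [Finset.sum_const, Finset.card_univ, Fintype.card_fin, nsmul_eq_mul, mul_add] at hcoord
  push_cast at hcoord
  rw [Fin.sum_univ_succ (fun j => (N j : ℤ))]
  linarith

lemma summable_norm_chainTerm (hq : ‖q‖ < 1) (hq0 : q ≠ 0) (a b : ℤ) :
    Summable fun N : Fin (m + 1) → ℕ => ‖chainTerm q a b N‖ := by
  obtain ⟨K, hK⟩ := exists_norm_qpInv_le hq
  have hK0 : 0 ≤ K := (norm_nonneg _).trans (hK 0)
  have hr0 : 0 < ‖q‖ := norm_pos_iff.2 hq0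
  refine Summable.of_nonneg_of_le (fun _ => norm_nonneg _) (fun N => ?_)
    ((summable_pow_sum_fin hr0.le hq (m + 1)).mul_left
      (K * K * K ^ m * ‖q‖ ^ (-((m + 1) * (min a b - 1) ^ 2))))
  have hprod : ‖∏ j : Fin m, qpInv q ((N j.succ : ℤ) - N j.castSucc)‖ ≤ K ^ m := by
    rw [norm_prod]
    exact (Finset.prod_le_prod (s := Finset.univ) (fun _ _ => norm_nonneg _)
      fun _ _ => hK _).trans_eq (by simp)
  have hpow : ‖q‖ ^ (∑ j, (N j : ℤ) ^ 2 + a * N 0 + b * ∑ j : Fin m, (N j.succ : ℤ))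
      ≤ ‖q‖ ^ (-((m + 1) * (min a b - 1) ^ 2)) * ‖q‖ ^ ∑ j, N j := by
    rw [← zpow_natCast, ← zpow_add₀ hr0.ne']
    exact zpow_le_zpow_right_of_le_one₀ hr0 hq.le
      (by push_cast; linarith [sum_sub_le_chainExponent a b N])
  calc ‖chainTerm q a b N‖
      = ‖q‖ ^ (∑ j, (N j : ℤ) ^ 2 + a * N 0 + b * ∑ j : Fin m, (N j.succ : ℤ)) *
        (‖qpInv q (N 0 + a)‖ * ‖qpInv q (N 0)‖ *
          ‖∏ j : Fin m, qpInv q ((N j.succ : ℤ) - N j.castSucc)‖) := by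
        simp only [chainTerm, norm_mul, norm_zpow]
    _ ≤ ‖q‖ ^ (-((m + 1) * (min a b - 1) ^ 2)) * ‖q‖ ^ (∑ j, N j) * (K * K * K ^ m) := by
        gcongr
        exacts [hK _, hK _]
    _ = _ := by ring

lemma tsum_chainTerm_cons (hq : ‖q‖ < 1) (hq0 : q ≠ 0) (μ : ℤ) (M : Fin (m + 1) → ℕ) :
    ∑' n, chainTerm q μ μ (Fin.cons n M : Fin (m + 2) → ℕ) = chainTerm q μ μ M := by
  set tail := q ^ (∑ j, (M j : ℤ) ^ 2 + μ * ∑ j, (M j : ℤ)) *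
    ∏ j : Fin m, qpInv q ((M j.succ : ℤ) - M j.castSucc)
  have hcons (n : ℕ) : chainTerm q μ μ (Fin.cons n M : Fin (m + 2) → ℕ)
      = durfeeTerm q μ (M 0) n * tail := by
    rw [chainTerm, Fin.sum_univ_succ, Fin.prod_univ_succ]
    simp only [Fin.cons_zero, Fin.cons_succ, Fin.castSucc_zero, ← Fin.succ_castSucc,
      durfeeTerm, tail]
    rw [show (n : ℤ) ^ 2 + ∑ j, (M j : ℤ) ^ 2 + μ * n + μ * ∑ j, (M j : ℤ)
        = (n ^ 2 + μ * n) + (∑ j, (M j : ℤ) ^ 2 + μ * ∑ j, (M j : ℤ)) by ring, zpow_add₀ hq0]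
    ring
  have hM : chainTerm q μ μ M = qpInv q (M 0 + μ) * qpInv q (M 0) * tail := by
    simp only [chainTerm, tail, Fin.sum_univ_succ (fun j => (M j : ℤ))]
    ring_nf
  rw [tsum_congr hcons, tsum_mul_right, tsum_durfeeTerm hq hq0, hM]

lemma tsum_chainTerm_self (hq : ‖q‖ < 1) (hq0 : q ≠ 0) (μ : ℤ) (m : ℕ) :
    ∑' N : Fin (m + 1) → ℕ, chainTerm q μ μ N = (∏' j : ℕ, (1 - q ^ (j + 1)))⁻¹ := by
  induction m with
  | zero =>
    rw [← (Equiv.funUnique (Fin 1) ℕ).symm.tsum_eq, ← tsum_durfee hq hq0 μ]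
    refine tsum_congr fun n => ?_
    simp [chainTerm]
  | succ m ih =>
    let e := (Equiv.prodComm _ _).trans (Fin.consEquiv fun _ : Fin (m + 2) => ℕ)
    have hsum : Summable fun p => chainTerm q μ μ (e p) :=
      (summable_norm_chainTerm hq hq0 μ μ).of_norm.comp_injective e.injective
    rw [← e.tsum_eq, hsum.tsum_prod]
    simpa [e, Fin.consEquiv, tsum_chainTerm_cons hq hq0] using ih

lemma chainTerm_sub_shift (hq : ‖q‖ < 1) (hq0 : q ≠ 0) (p : ℕ) (N : Fin (m + 1) → ℕ) :
    chainTerm q (p - 1) p N - q ^ (p : ℤ) * chainTerm q (-p - 1) (-p) (fun j => N j + p)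
      = (1 - q ^ (p : ℤ)) * chainTerm q p p N := by
  have hsq : ∑ j, ((N j + p : ℕ) : ℤ) ^ 2
      = ∑ j, (N j : ℤ) ^ 2 + 2 * p * (N 0 + ∑ j : Fin m, (N j.succ : ℤ)) + (m + 1) * p ^ 2 := by
    simp only [Nat.cast_add, add_sq, Finset.sum_add_distrib, Finset.sum_const, Finset.card_univ,
      Fintype.card_fin, nsmul_eq_mul, ← Finset.sum_mul, ← Finset.mul_sum,
      Fin.sum_univ_succ (fun j => (N j : ℤ))]
    push_cast
    ring
  have hlin : ∑ j : Fin m, ((N j.succ + p : ℕ) : ℤ) = ∑ j : Fin m, (N j.succ : ℤ) + m * p := by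
    simp [Finset.sum_add_distrib]
  have hprod : ∏ j : Fin m, qpInv q (((N j.succ + p : ℕ) : ℤ) - (N j.castSucc + p : ℕ))
      = ∏ j : Fin m, qpInv q ((N j.succ : ℤ) - N j.castSucc) := by
    simp
  simp only [chainTerm, hsq, hlin, hprod]
  push_cast
  rw [show (N 0 : ℤ) + (p - 1) = N 0 + p - 1 by ring, qpInv_sub_one hq,
    show (N 0 : ℤ) + p + (-p - 1) = N 0 - 1 by ring, qpInv_sub_one hq]
  set n₀ : ℤ := (N 0 : ℤ)
  set s₂ : ℤ := ∑ j, (N j : ℤ) ^ 2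
  set s₁ : ℤ := ∑ j : Fin m, (N j.succ : ℤ)
  have e₁ : q ^ (p : ℤ) * q ^ (s₂ + 2 * p * (n₀ + s₁) + (m + 1) * p ^ 2 + (-p - 1) * (n₀ + p)
      + -p * (s₁ + m * p)) = q ^ (s₂ + (p - 1) * n₀ + p * s₁) := by
    rw [← zpow_add₀ hq0]; congr 1; ring
  have e₂ : q ^ (s₂ + p * n₀ + p * s₁) = q ^ (s₂ + (p - 1) * n₀ + p * s₁) * q ^ n₀ := by
    rw [← zpow_add₀ hq0]; congr 1; ring
  have e₃ : q ^ (n₀ + p) = q ^ n₀ * q ^ (p : ℤ) := zpow_add₀ hq0 _ _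
  linear_combination
    -(qpInv q (n₀ + p) * qpInv q n₀ * ∏ j : Fin m, qpInv q ((N j.succ : ℤ) - N j.castSucc)) *
      ((1 - q ^ n₀) * e₁ + (1 - q ^ (p : ℤ)) * e₂ + q ^ (s₂ + (p - 1) * n₀ + p * s₁) * e₃)

lemma monotone_of_chainTerm_ne_zero {a b : ℤ} {N : Fin (m + 1) → ℕ} (h : chainTerm q a b N ≠ 0) :
    Monotone N ∧ 0 ≤ (N 0 : ℤ) + a := by
  refine ⟨Fin.monotone_iff_le_succ.2 fun j => ?_, ?_⟩ <;> by_contra hlt <;> apply h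
  · rw [chainTerm, Finset.prod_eq_zero (Finset.mem_univ j) (qpInv_of_neg (by omega))]
    ring
  · rw [chainTerm, qpInv_of_neg (by omega)]
    ring

lemma tsum_chainTerm_shift (p : ℕ) :
    ∑' N : Fin (m + 1) → ℕ, chainTerm q (-p - 1) (-p) (fun j => N j + p)
      = ∑' N : Fin (m + 1) → ℕ, chainTerm q (-p - 1) (-p) N := by
  refine Function.Injective.tsum_eq (fun N N' h => funext fun j => by simpa using congrFun h j)
    fun N hN => ⟨fun j => N j - p, funext fun j => ?_⟩
  -- a nonzero term has `N` monotone with `N 0 ≥ p + 1`, so every `N j` is at least `p`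
  obtain ⟨hmono, h0⟩ := monotone_of_chainTerm_ne_zero hN
  have := hmono (Fin.zero_le j)
  show N j - p + p = N j
  omega

lemma FF_sub_eq_natCast (hq : ‖q‖ < 1) (hq0 : q ≠ 0) (m p : ℕ) :
    FF q (m + 1) (p - 1) - q ^ (p : ℤ) * FF q (m + 1) (-p - 1)
      = (1 - q ^ (p : ℤ)) * (∏' j : ℕ, (1 - q ^ (j + 1)))⁻¹ := by
  have hshift : Summable fun N : Fin (m + 1) → ℕ =>
      q ^ (p : ℤ) * chainTerm q (-p - 1) (-p) (fun j => N j + p) :=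
    ((summable_norm_chainTerm hq hq0 _ _).of_norm.comp_injective
      fun N N' h => funext fun j => by simpa using congrFun h j).mul_left _
  rw [FF_eq_tsum_chainTerm, FF_eq_tsum_chainTerm, sub_add_cancel,
    show -(p : ℤ) - 1 + 1 = -p by ring, ← tsum_chainTerm_shift, ← tsum_mul_left,
    ← ((summable_norm_chainTerm hq hq0 _ _).of_norm).tsum_sub hshift,
    tsum_congr (chainTerm_sub_shift hq hq0 p), tsum_mul_left, tsum_chainTerm_self hq hq0]

end Chains

/-- `F_k(μ-1) - q^μ F_k(-μ-1) = (1 - q^μ)/(q)_∞`. -/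
theorem stmt14 (q : ℂ) (hq : ‖q‖ < 1) (hq0 : q ≠ 0) (k : ℕ) (hk : 1 ≤ k) (μ : ℤ) :
    FF q k (μ - 1) - q ^ μ * FF q k (-μ - 1)
      = (1 - q ^ μ) * (∏' j : ℕ, (1 - q ^ (j + 1)))⁻¹ := by
  obtain ⟨m, rfl⟩ := Nat.exists_eq_add_of_le' hk
  obtain ⟨p, rfl | rfl⟩ := Int.eq_nat_or_neg μ
  · exact FF_sub_eq_natCast hq hq0 m p
  · have h := FF_sub_eq_natCast hq hq0 m p
    have hinv : q ^ (-p : ℤ) * q ^ (p : ℤ) = 1 := by rw [← zpow_add₀ hq0, neg_add_cancel, zpow_zero]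
    rw [neg_neg]
    linear_combination (-q ^ (-p : ℤ)) * h
      - (FF q (m + 1) (-p - 1) - (∏' j : ℕ, (1 - q ^ (j + 1)))⁻¹) * hinv
end

section
/- For p = 3 the admissibility conditions on monomial exponents read: n_1 ∈ ℤ_{≥0} + Δ_{2,1}, n_{i+1} − n_i ≥ −p'/2 + 3 (1 ≤ i ≤ L−1), n_{i+2} − n_i ≥ 1 (1 ≤ i ≤ L−2), where Δ_{2,1} = (p'−2)/4 and n_i ∈ ℤ − (−1)^i Δ_{2,1}. Claim: any rewriting process that replaces a pair (n_i, n_{i+1}) with n_{i+1} − n_i ≤ −p'/2 + 2 by (n_i − l, n_{i+1} + l) with l ≥ 1 preserves Σ n_i, strictly increases Σ i·n_i, and (given Σ_{j=1}^{i} n_j > 0 for all i) terminates after finitely many steps. -/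
/-!
A step moves an integer amount `l ≥ 1` from `n_i` to `n_{i+1}`, so it leaves `Σ n_i` unchanged and
raises `Σ i n_i` by exactly `l`. By Abel summation `L Σ n_i - Σ i n_i = Σ_{i<L} (n_1 + ⋯ + n_i)`,
which is nonnegative when the partial sums are positive; hence along any rewriting sequence the
weighted sum grows by at least one per step while staying below `L Σ n_i`, a quantity that the
steps do not change.
-/

/-- The set `S` of sequences `(n_1,…,n_L)` with `n_i ∈ ℤ - (-1)^i Δ_{2,1}`
(`Δ_{2,1} = (p'-2)/4`) and all partial sums `Σ_{j=1}^i n_j` positive. -/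
def InS (p' L : ℕ) (n : ℕ → ℚ) : Prop :=
  (∀ i, 1 ≤ i → i ≤ L → ∃ z : ℤ, n i = (z : ℚ) - (-1 : ℚ) ^ i * (((p' : ℚ) - 2) / 4)) ∧
  ∀ i, 1 ≤ i → i ≤ L → 0 < ∑ j ∈ Finset.Icc 1 i, n j

/-- A rewriting step: choose `i` with `n_{i+1} - n_i ≤ -p'/2 + 2` and an integer `l ≥ 1`,
and replace `(n_i, n_{i+1})` by `(n_i - l, n_{i+1} + l)`. -/
def StepR (p' L : ℕ) (n n' : ℕ → ℚ) : Prop :=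
  ∃ i : ℕ, 1 ≤ i ∧ i + 1 ≤ L ∧
    ∃ l : ℤ, 1 ≤ l ∧ n (i + 1) - n i ≤ -(p' : ℚ) / 2 + 2 ∧
      n' i = n i - l ∧ n' (i + 1) = n (i + 1) + l ∧
      ∀ j, j ≠ i → j ≠ i + 1 → n' j = n j

open Finset

theorem sum_mul_eq_add_of_transfer {R : Type*} [CommRing R] {s : Finset ℕ} {n n' w : ℕ → R}
    {i : ℕ} {c : R} (hi : i ∈ s) (hi' : i + 1 ∈ s) (h_left : n' i = n i - c)
    (h_right : n' (i + 1) = n (i + 1) + c) (h_else : ∀ j, j ≠ i → j ≠ i + 1 → n' j = n j) :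
    ∑ j ∈ s, w j * n' j = ∑ j ∈ s, w j * n j + (w (i + 1) - w i) * c := by
  have h_diff : ∑ j ∈ s, w j * (n' j - n j) =
      w i * (n' i - n i) + w (i + 1) * (n' (i + 1) - n (i + 1)) :=
    sum_eq_add_of_mem i (i + 1) hi hi' (by omega) fun j _ hj => by
      rw [h_else j hj.1 hj.2, sub_self, mul_zero]
  simp only [mul_sub, sum_sub_distrib, h_left, h_right] at h_diff
  linear_combination h_diff

theorem sum_Icc_mul_le_mul_sum_Icc {R : Type*} [CommRing R] [LinearOrder R] [IsOrderedRing R]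
    (L : ℕ) (n : ℕ → R) (h : ∀ i, 1 ≤ i → i < L → 0 ≤ ∑ j ∈ Icc 1 i, n j) :
    ∑ i ∈ Icc 1 L, (i : R) * n i ≤ L * ∑ i ∈ Icc 1 L, n i := by
  induction L with
  | zero => simp
  | succ M ih =>
    have h_partial : 0 ≤ ∑ j ∈ Icc 1 M, n j := by
      rcases Nat.eq_zero_or_pos M with rfl | hM
      · simp
      · exact h M hM (by omega)
    have ih' := ih fun i hi hiM => h i hi (by omega)
    rw [sum_Icc_succ_top (by omega), sum_Icc_succ_top (by omega)]
    push_cast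
    linear_combination ih' + h_partial

namespace StepR

variable {p' L : ℕ} {n n' : ℕ → ℚ}

theorem sum_eq (h : StepR p' L n n') : ∑ i ∈ Icc 1 L, n' i = ∑ i ∈ Icc 1 L, n i := by
  obtain ⟨i, hi, hiL, l, -, -, h_left, h_right, h_else⟩ := h
  simpa using sum_mul_eq_add_of_transfer (w := fun _ => (1 : ℚ))
    (mem_Icc.2 ⟨hi, by omega⟩) (mem_Icc.2 ⟨by omega, hiL⟩) h_left h_right h_else

theorem weighted_sum_add_one_le (h : StepR p' L n n') :
    ∑ i ∈ Icc 1 L, (i : ℚ) * n i + 1 ≤ ∑ i ∈ Icc 1 L, (i : ℚ) * n' i := by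
  obtain ⟨i, hi, hiL, l, hl, -, h_left, h_right, h_else⟩ := h
  rw [sum_mul_eq_add_of_transfer (w := fun j => (j : ℚ))
    (mem_Icc.2 ⟨hi, by omega⟩) (mem_Icc.2 ⟨by omega, hiL⟩) h_left h_right h_else]
  have : (1 : ℚ) ≤ l := by exact_mod_cast hl
  push_cast
  linarith

end StepR

theorem InS.weighted_sum_le {p' L : ℕ} {n : ℕ → ℚ} (h : InS p' L n) :
    ∑ i ∈ Icc 1 L, (i : ℚ) * n i ≤ L * ∑ i ∈ Icc 1 L, n i :=
  sum_Icc_mul_le_mul_sum_Icc L n fun i hi hiL => (h.2 i hi hiL.le).le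

theorem stmt18_general (p' L : ℕ) :
    (∀ n n' : ℕ → ℚ, InS p' L n → InS p' L n' → StepR p' L n n' →
        (∑ i ∈ Finset.Icc 1 L, n' i = ∑ i ∈ Finset.Icc 1 L, n i) ∧
          ∑ i ∈ Finset.Icc 1 L, (i : ℚ) * n i < ∑ i ∈ Finset.Icc 1 L, (i : ℚ) * n' i) ∧
      ¬∃ f : ℕ → ℕ → ℚ, (∀ k, InS p' L (f k)) ∧ ∀ k, StepR p' L (f k) (f (k + 1)) := by
  refine ⟨fun n n' _ _ h => ⟨h.sum_eq, by linarith [h.weighted_sum_add_one_le]⟩, ?_⟩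
  rintro ⟨f, hS, hstep⟩
  let weighted (k : ℕ) : ℚ := ∑ i ∈ Icc 1 L, (i : ℚ) * f k i
  have h_sum (k : ℕ) : ∑ i ∈ Icc 1 L, f k i = ∑ i ∈ Icc 1 L, f 0 i := by
    induction k with
    | zero => rfl
    | succ k ih => exact (hstep k).sum_eq.trans ih
  have h_grow (k : ℕ) : weighted 0 + k ≤ weighted k := by
    induction k with
    | zero => simp
    | succ k ih => push_cast; linarith [(hstep k).weighted_sum_add_one_le]
  obtain ⟨k, hk⟩ := exists_nat_gt (L * ∑ i ∈ Icc 1 L, f 0 i - weighted 0)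
  have h_bound := (hS k).weighted_sum_le
  rw [h_sum k] at h_bound
  linarith [h_grow k]

/-- Each rewriting step preserves `Σ n_i` and strictly increases `Σ i n_i`, and any
rewriting sequence within `S` terminates after finitely many steps. -/
theorem stmt18 (p' L : ℕ) (hp : 3 < p') (hcop : Nat.Coprime 3 p') (hL : 1 ≤ L) :
    (∀ n n' : ℕ → ℚ, InS p' L n → InS p' L n' → StepR p' L n n' →
        (∑ i ∈ Finset.Icc 1 L, n' i = ∑ i ∈ Finset.Icc 1 L, n i) ∧
          ∑ i ∈ Finset.Icc 1 L, (i : ℚ) * n i < ∑ i ∈ Finset.Icc 1 L, (i : ℚ) * n' i) ∧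
      ¬∃ f : ℕ → ℕ → ℚ, (∀ k, InS p' L (f k)) ∧ ∀ k, StepR p' L (f k) (f (k + 1)) :=
  stmt18_general p' L
end
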